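/- arXiv:2504.16682 — 5 statements merged into one kernel-verified Lean document; each statement's English description precedes it below -/
import Mathlib

section
/- Let d ≥ 1, c > 0, k an integer, and define ρ(x,y) = c‖x−y‖^d on ℝ^d. If x, x', b ∈ ℝ^d satisfy ρ(x,x') ≤ 2^(−d)·(2^(−k) + ρ(x,b)), then for every point z on the open line segment between x and x', one has ‖z − b‖^d ≥ 2^(−d)·(‖x−b‖^d − c^(−1)·2^(−k)). -/
theorem stmt_1 (d : ℕ) (hd : 1 ≤ d) (c : ℝ) (hc : 0 < c) (k : ℤ)
    (x x' b : EuclideanSpace ℝ (Fin d))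
    (h : c * ‖x - x'‖ ^ d ≤ (2 : ℝ) ^ (-(d : ℤ)) * ((2 : ℝ) ^ (-k) + c * ‖x - b‖ ^ d)) :
    ∀ t ∈ Set.Ioo (0 : ℝ) 1, ∀ z : EuclideanSpace ℝ (Fin d),
      z = x + t • (x' - x) →
      ‖z - b‖ ^ d ≥ (2 : ℝ) ^ (-(d : ℤ)) * (‖x - b‖ ^ d - c⁻¹ * (2 : ℝ) ^ (-k)) := by
  intro t ht z hz
  set P : ℝ := (2 : ℝ) ^ d with hP
  have hPpos : 0 < P := by positivity
  have hPz : (2 : ℝ) ^ (-(d : ℤ)) = P⁻¹ := by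
    rw [zpow_neg, zpow_natCast]
  have hK : (0 : ℝ) ≤ c⁻¹ * (2 : ℝ) ^ (-k) := by positivity
  -- bound ‖x - z‖ by ‖x - x'‖
  have hxz : ‖x - z‖ ≤ ‖x - x'‖ := by
    have : x - z = t • (x - x') := by
      rw [hz]; module
    rw [this, norm_smul]
    have := ht.1
    have := ht.2
    calc ‖t‖ * ‖x - x'‖ = t * ‖x - x'‖ := by
          rw [Real.norm_eq_abs, abs_of_pos ht.1]
      _ ≤ 1 * ‖x - x'‖ := by
          apply mul_le_mul_of_nonneg_right (le_of_lt ht.2) (norm_nonneg _)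
      _ = ‖x - x'‖ := one_mul _
  -- from h: ‖x - x'‖ ^ d ≤ P⁻¹ * (c⁻¹ * 2^(-k) + ‖x - b‖ ^ d)
  have hU : ‖x - z‖ ^ d ≤ P⁻¹ * (c⁻¹ * (2 : ℝ) ^ (-k) + ‖x - b‖ ^ d) := by
    have h1 : ‖x - z‖ ^ d ≤ ‖x - x'‖ ^ d :=
      pow_le_pow_left₀ (norm_nonneg _) hxz d
    have h2 : c * ‖x - x'‖ ^ d ≤ P⁻¹ * ((2 : ℝ) ^ (-k) + c * ‖x - b‖ ^ d) := by
      rwa [hPz] at h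
    have h3 : ‖x - x'‖ ^ d ≤ c⁻¹ * (P⁻¹ * ((2 : ℝ) ^ (-k) + c * ‖x - b‖ ^ d)) := by
      rw [le_inv_mul_iff₀ hc]
      linarith
    calc ‖x - z‖ ^ d ≤ ‖x - x'‖ ^ d := h1
      _ ≤ c⁻¹ * (P⁻¹ * ((2 : ℝ) ^ (-k) + c * ‖x - b‖ ^ d)) := h3
      _ = P⁻¹ * (c⁻¹ * (2 : ℝ) ^ (-k) + ‖x - b‖ ^ d) := by
          field_simp
  -- triangle inequality and power comparison
  have tri : ‖x - b‖ ≤ ‖x - z‖ + ‖z - b‖ := by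
    have : x - b = (x - z) + (z - b) := by module
    rw [this]; exact norm_add_le _ _
  have key : ‖x - b‖ ^ d ≤ 2 ^ (d - 1) * (‖x - z‖ ^ d + ‖z - b‖ ^ d) := by
    calc ‖x - b‖ ^ d ≤ (‖x - z‖ + ‖z - b‖) ^ d :=
          pow_le_pow_left₀ (norm_nonneg _) tri d
      _ ≤ 2 ^ (d - 1) * (‖x - z‖ ^ d + ‖z - b‖ ^ d) :=
          add_pow_le (norm_nonneg _) (norm_nonneg _) d
  have hhalf : (2 : ℝ) ^ (d - 1) = P / 2 := by
    rw [hP, eq_div_iff (two_ne_zero), ← pow_succ, Nat.sub_add_cancel hd]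
  rw [hhalf] at key
  rw [hPz, ge_iff_le, inv_mul_le_iff₀ hPpos]
  have hU' : P * (P⁻¹ * (c⁻¹ * (2 : ℝ) ^ (-k) + ‖x - b‖ ^ d))
      = c⁻¹ * (2 : ℝ) ^ (-k) + ‖x - b‖ ^ d :=
    mul_inv_cancel_left₀ (ne_of_gt hPpos) _
  nlinarith [mul_le_mul_of_nonneg_left hU (le_of_lt hPpos)]
end

section
/- Let d ≥ 1, c > 0, k an integer, and define ρ(x,y) = c‖x−y‖^d on ℝ^d. If x, x', b, b' ∈ ℝ^d satisfy ρ(x,x') ≤ 3^(−d)·(2^(−k) + ρ(x,b)) and ρ(b,b') ≤ 3^(−d)·(2^(−k) + ρ(x,b)), then for any z on the segment between b and b' and any z' on the segment between x and x', one has ‖z' − z‖^d ≥ 3^(−d)·(‖x−b‖^d − c^(−1)·2^(1−k)). -/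
/-!
Put `S = c⁻¹ 2^(-k) + ‖x - b‖^d`. The hypotheses say that both displacements `‖x - x'‖` and
`‖b - b'‖` are at most `u / 3` for some `u` with `u^d ≤ S`, so by the triangle inequality
`3 ‖z' - z‖ ≥ 3 ‖x - b‖ - 2u`. Convexity of `s ↦ s^d` turns this into
`(3 ‖z' - z‖)^d ≥ 3 ‖x - b‖^d - 2 u^d ≥ 3 ‖x - b‖^d - 2 S`, which is the claim.
-/

open Set

/-- When `3a - 2u < 0` the left side is already nonpositive; otherwise write `a` as the convex
combination `(2/3) u + (1/3) (3a - 2u)` and apply convexity of `s ↦ s^d`. -/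
lemma three_mul_pow_sub_two_mul_pow_le {d : ℕ} (hd : 1 ≤ d) {a u w : ℝ} (ha : 0 ≤ a)
    (hu : 0 ≤ u) (hw : 0 ≤ w) (h : 3 * a - 2 * u ≤ w) :
    3 * a ^ d - 2 * u ^ d ≤ w ^ d := by
  by_cases hv : 0 ≤ 3 * a - 2 * u
  · have hconv := (convexOn_pow d).2 (mem_Ici.mpr hu) (mem_Ici.mpr hv)
      (by norm_num : (0 : ℝ) ≤ 2 / 3) (by norm_num : (0 : ℝ) ≤ 1 / 3) (by norm_num)
    have hcomb : 2 / 3 * u + 1 / 3 * (3 * a - 2 * u) = a := by ring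
    simp only [smul_eq_mul, hcomb] at hconv
    have := pow_le_pow_left₀ hv h d
    linarith
  · have hle : a ^ d ≤ (2 / 3 * u) ^ d := pow_le_pow_left₀ ha (by linarith) d
    have hshrink : (2 / 3 : ℝ) ^ d ≤ 2 / 3 :=
      pow_le_of_le_one (by norm_num) (by norm_num) (by omega)
    rw [mul_pow] at hle
    nlinarith [pow_nonneg hu d, pow_nonneg hw d]

lemma norm_smul_le_of_mem_Icc {E : Type*} [SeminormedAddCommGroup E] [NormedSpace ℝ E]
    {t : ℝ} (ht : t ∈ Icc (0 : ℝ) 1) (v : E) : ‖t • v‖ ≤ ‖v‖ := by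
  rw [norm_smul, Real.norm_of_nonneg ht.1]
  exact mul_le_of_le_one_left (norm_nonneg v) ht.2

lemma norm_sub_le_norm_sub_add_norm_sub_add_norm_sub {E : Type*} [SeminormedAddCommGroup E]
    [NormedSpace ℝ E] (x x' b b' : E) {t t' : ℝ} (ht : t ∈ Icc (0 : ℝ) 1)
    (ht' : t' ∈ Icc (0 : ℝ) 1) :
    ‖x - b‖ ≤ ‖(x + t' • (x' - x)) - (b + t • (b' - b))‖ + ‖x - x'‖ + ‖b - b'‖ := by
  have hsplit : x - b = ((x + t' • (x' - x)) - (b + t • (b' - b))) + t • (b' - b)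
      - t' • (x' - x) := by abel
  calc ‖x - b‖ ≤ ‖(x + t' • (x' - x)) - (b + t • (b' - b))‖ + ‖t • (b' - b)‖
        + ‖t' • (x' - x)‖ := by
          rw [hsplit]; exact (norm_sub_le _ _).trans (by gcongr; exact norm_add_le _ _)
    _ ≤ _ := by
      rw [norm_sub_rev x x', norm_sub_rev b b']
      linarith [norm_smul_le_of_mem_Icc ht (b' - b), norm_smul_le_of_mem_Icc ht' (x' - x)]

lemma mul_pow_le_of_mul_pow_le_zpow_neg {d : ℕ} {c r S l : ℝ} (hc : 0 < c) (hl : 0 < l)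
    (h : c * r ^ d ≤ l ^ (-(d : ℤ)) * (c * S)) : (l * r) ^ d ≤ S := by
  rw [zpow_neg, zpow_natCast, mul_left_comm, mul_le_mul_iff_right₀ hc,
    le_inv_mul_iff₀ (by positivity)] at h
  rwa [mul_pow]

theorem stmt_2 (d : ℕ) (hd : 1 ≤ d) (c : ℝ) (hc : 0 < c) (k : ℤ)
    (x x' b b' : EuclideanSpace ℝ (Fin d))
    (h1 : c * ‖x - x'‖ ^ d ≤ (3 : ℝ) ^ (-(d : ℤ)) * ((2 : ℝ) ^ (-k) + c * ‖x - b‖ ^ d))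
    (h2 : c * ‖b - b'‖ ^ d ≤ (3 : ℝ) ^ (-(d : ℤ)) * ((2 : ℝ) ^ (-k) + c * ‖x - b‖ ^ d)) :
    ∀ t ∈ Set.Icc (0 : ℝ) 1, ∀ t' ∈ Set.Icc (0 : ℝ) 1,
      ∀ z z' : EuclideanSpace ℝ (Fin d),
      z = b + t • (b' - b) → z' = x + t' • (x' - x) →
      ‖z' - z‖ ^ d ≥ (3 : ℝ) ^ (-(d : ℤ)) * (‖x - b‖ ^ d - c⁻¹ * (2 : ℝ) ^ (1 - k)) := by
  rintro t ht t' ht' z z' rfl rfl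
  set S := c⁻¹ * (2 : ℝ) ^ (-k) + ‖x - b‖ ^ d
  have hcS : (2 : ℝ) ^ (-k) + c * ‖x - b‖ ^ d = c * S := by
    rw [mul_add, mul_inv_cancel_left₀ hc.ne']
  rw [hcS] at h1 h2
  obtain ⟨u, hxu, hbu, huS⟩ : ∃ u, 3 * ‖x - x'‖ ≤ u ∧ 3 * ‖b - b'‖ ≤ u ∧ u ^ d ≤ S := by
    refine ⟨max (3 * ‖x - x'‖) (3 * ‖b - b'‖), le_max_left _ _, le_max_right _ _, ?_⟩
    rcases max_choice (3 * ‖x - x'‖) (3 * ‖b - b'‖) with hu | hu <;> rw [hu]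
    exacts [mul_pow_le_of_mul_pow_le_zpow_neg hc three_pos h1,
      mul_pow_le_of_mul_pow_le_zpow_neg hc three_pos h2]
  have hmain := three_mul_pow_sub_two_mul_pow_le hd (norm_nonneg (x - b))
    ((mul_nonneg zero_le_three (norm_nonneg _)).trans hxu)
    (mul_nonneg zero_le_three (norm_nonneg (x + t' • (x' - x) - (b + t • (b' - b)))))
    (by linarith [norm_sub_le_norm_sub_add_norm_sub_add_norm_sub x x' b b' ht ht'])
  have h2k : c⁻¹ * (2 : ℝ) ^ (1 - k) = 2 * (c⁻¹ * 2 ^ (-k)) := by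
    rw [sub_eq_add_neg, zpow_add₀ two_ne_zero, zpow_one]; ring
  rw [mul_pow] at hmain
  rw [ge_iff_le, zpow_neg, zpow_natCast, inv_mul_le_iff₀ (by positivity), h2k]
  linarith
end

section
/- Let σ : ℝ^d → ℝ be differentiable with ‖∇σ(x)‖ ≤ C′ / (c^{−1} + ‖x‖^d)^{1+ε+1/d} for all x, where C′, c, ε > 0. Define S_k(x,b) = 2^k σ(2^{k/d}(x−b)). Then whenever c‖x−x'‖^d ≤ 3^{−d}(2^{−k} + c‖x−b‖^d), one has |S_k(x,b) − S_k(x',b)| ≤ C · (c‖x−x'‖^d / (2^{−k} + c‖x−b‖^d))^{1/d} · 2^{−kε}/(2^{−k} + c‖x−b‖^d)^{1+ε}, with C = 2^{1+d(1+ε)} c^{1+ε} C′. -/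
set_option maxHeartbeats 1000000 in
theorem stmt_5 (d : ℕ) (hd : 1 ≤ d) (σ : EuclideanSpace ℝ (Fin d) → ℝ)
    (C' c ε : ℝ) (hC' : 0 < C') (hc : 0 < c) (hε : 0 < ε)
    (hdiff : Differentiable ℝ σ)
    (hgrad : ∀ x, ‖fderiv ℝ σ x‖ ≤ C' / (c⁻¹ + ‖x‖ ^ d) ^ (1 + ε + 1 / d))
    (k : ℤ) (x x' b : EuclideanSpace ℝ (Fin d))
    (h : c * ‖x - x'‖ ^ d ≤ (3 : ℝ) ^ (-(d : ℤ)) * ((2 : ℝ) ^ (-k) + c * ‖x - b‖ ^ d)) :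
    |(2 : ℝ) ^ k * σ ((2 : ℝ) ^ ((k : ℝ) / d) • (x - b)) -
      (2 : ℝ) ^ k * σ ((2 : ℝ) ^ ((k : ℝ) / d) • (x' - b))| ≤
      (2 : ℝ) ^ (1 + d * (1 + ε)) * c ^ (1 + ε) * C' *
        (c * ‖x - x'‖ ^ d / ((2 : ℝ) ^ (-k) + c * ‖x - b‖ ^ d)) ^ ((1 : ℝ) / d) *
        ((2 : ℝ) ^ (-(k : ℝ) * ε) / ((2 : ℝ) ^ (-k) + c * ‖x - b‖ ^ d) ^ (1 + ε)) := by
  have hd0 : (0:ℝ) < d := by exact_mod_cast hd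
  have hdne : (d:ℝ) ≠ 0 := ne_of_gt hd0
  set δ : ℝ := ‖x - x'‖ with hδdef
  have hδ0 : 0 ≤ δ := norm_nonneg _
  set D : ℝ := (2:ℝ)^(-k) + c * ‖x - b‖^d with hDdef
  have hD0 : 0 < D := by positivity
  set u : ℝ := c⁻¹ * (2:ℝ)^(-k) with hudef
  have hu0 : 0 < u := by positivity
  set A : ℝ := u + ‖x - b‖^d with hAdef
  have hAD : A = c⁻¹ * D := by rw [hAdef, hudef, hDdef]; field_simp
  have hA0 : 0 < A := by positivity
  set E : ℝ := (2:ℝ)^((k:ℝ)) with hEdef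
  have hE0 : 0 < E := Real.rpow_pos_of_pos two_pos _
  have hEz : ((2:ℝ)^k : ℝ) = E := (Real.rpow_intCast 2 k).symm
  have hEinv : ((2:ℝ)^(-k) : ℝ) = E⁻¹ := by
    rw [hEdef, ← Real.rpow_intCast 2 (-k), ← Real.rpow_neg (by norm_num)]
    push_cast; ring_nf
  set t : ℝ := (2:ℝ)^((k:ℝ)/d) with htdef
  have ht0 : 0 < t := Real.rpow_pos_of_pos two_pos _
  have htd : t^d = E := by
    rw [htdef, hEdef, ← Real.rpow_natCast ((2:ℝ)^((k:ℝ)/d)) d,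
      ← Real.rpow_mul (by norm_num)]
    congr 1; field_simp
  -- δ^d ≤ A / 3^d
  have h3 : δ^d ≤ A / 3^d := by
    have h3z : ((3:ℝ)^(-(d:ℤ)) : ℝ) = ((3:ℝ)^d)⁻¹ := by
      rw [zpow_neg, zpow_natCast]
    have : c * δ^d ≤ ((3:ℝ)^d)⁻¹ * D := by rw [← h3z]; exact h
    rw [hAD, div_eq_mul_inv]
    have h3p : (0:ℝ) < (3:ℝ)^d := by positivity
    calc δ^d = c⁻¹ * (c * δ^d) := by field_simp
    _ ≤ c⁻¹ * (((3:ℝ)^d)⁻¹ * D) := by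
        apply mul_le_mul_of_nonneg_left this (by positivity)
    _ = c⁻¹ * D * ((3:ℝ)^d)⁻¹ := by ring
  -- key scalar inequality
  have hscal : ∀ nw : ℝ, 0 ≤ nw → ‖x - b‖ ≤ nw + δ → A ≤ 2^d * (u + nw^d) := by
    intro nw hnw hle
    have h1 : ‖x - b‖^d ≤ (nw + δ)^d := pow_le_pow_left₀ (norm_nonneg _) hle d
    have h2 : (nw + δ)^d ≤ 2^(d-1) * (nw^d + δ^d) := add_pow_le hnw hδ0 d
    have hQ : (2:ℝ)^d = 2 * 2^(d-1) := by
      conv_lhs => rw [show d = (d-1)+1 by omega]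
      rw [pow_succ']
    have hQR : (2:ℝ)^d ≤ 3^d := pow_le_pow_left₀ (by norm_num) (by norm_num) d
    have h3p : (0:ℝ) < (3:ℝ)^d := by positivity
    have h2p : (0:ℝ) < (2:ℝ)^(d-1) := by positivity
    have hP1 : (1:ℝ) ≤ (2:ℝ)^(d-1) := one_le_pow₀ (by norm_num)
    have hnwd : (0:ℝ) ≤ nw^d := by positivity
    rw [mul_add] at h2
    have hstep : A ≤ u + 2^(d-1) * nw^d + 2^(d-1) * (A / 3^d) := by
      have e2 : 2^(d-1)*δ^d ≤ 2^(d-1)*(A/3^d) := mul_le_mul_of_nonneg_left h3 h2p.le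
      rw [hAdef]
      linarith [h1, h2, e2]
    have hA3 : 2 * (2^(d-1) * (A/3^d)) ≤ A := by
      have he : 2 * ((2:ℝ)^(d-1) * (A/3^d)) = 2^d * A / 3^d := by rw [hQ]; ring
      rw [he, div_le_iff₀ h3p]
      nlinarith [mul_le_mul_of_nonneg_right hQR hA0.le]
    have hq : u ≤ 2^(d-1) * u := le_mul_of_one_le_left hu0.le hP1
    have final : A ≤ 2*(2^(d-1)*u) + 2*(2^(d-1)*nw^d) := by linarith [hstep, hA3, hq]
    calc A ≤ 2*(2^(d-1)*u) + 2*(2^(d-1)*nw^d) := final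
    _ = 2 * 2^(d-1) * (u + nw^d) := by ring
    _ = 2^d * (u + nw^d) := by rw [hQ]
  -- lower bound on the segment
  set p : ℝ := 1 + ε + 1/(d:ℝ) with hpdef
  set L : ℝ := E * A / 2^d with hLdef
  have hL0 : 0 < L := by positivity
  have hbound : ∀ z ∈ segment ℝ (t • (x - b)) (t • (x' - b)),
      ‖fderiv ℝ σ z‖ ≤ C' / L^p := by
    intro z hz
    obtain ⟨a, b', ha, hb', hab, rfl⟩ := hz
    have hzw : a • (t • (x-b)) + b' • (t • (x'-b)) = t • (a • (x-b) + b' • (x'-b)) := by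
      rw [smul_add, smul_comm a t, smul_comm b' t]
    set w := a • (x-b) + b' • (x'-b) with hwdef
    have hxw : ‖x - b‖ ≤ ‖w‖ + δ := by
      have ha' : a = 1 - b' := by linarith
      have : (x - b) - w = b' • (x - x') := by
        rw [hwdef, ha']; module
      have hnb : ‖(x - b) - w‖ = b' * δ := by
        rw [this, norm_smul, Real.norm_eq_abs, abs_of_nonneg hb']
      have hb1 : b' ≤ 1 := by linarith
      have h5 : ‖x - b‖ - ‖w‖ ≤ b' * δ := le_trans (norm_sub_norm_le (x - b) w) (by rw [hnb])
      have h6 : b' * δ ≤ δ := mul_le_of_le_one_left hδ0 hb1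
      linarith
    have hkey : L ≤ c⁻¹ + ‖a • (t • (x-b)) + b' • (t • (x'-b))‖^d := by
      rw [hzw, norm_smul, Real.norm_eq_abs, abs_of_nonneg ht0.le, mul_pow, htd]
      have hcu : c⁻¹ = E * u := by
        rw [hudef, hEinv]; field_simp
      rw [hcu, ← mul_add]
      rw [hLdef, div_le_iff₀ (by positivity)]
      have := hscal ‖w‖ (norm_nonneg _) hxw
      calc E * A ≤ E * (2^d * (u + ‖w‖^d)) := by
            apply mul_le_mul_of_nonneg_left this hE0.le
      _ = E * (u + ‖w‖^d) * 2^d := by ring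
    calc ‖fderiv ℝ σ _‖ ≤ C' / (c⁻¹ + ‖a • (t • (x-b)) + b' • (t • (x'-b))‖^d)^p :=
          hgrad _
    _ ≤ C' / L^p := by
        apply div_le_div_of_nonneg_left hC'.le (Real.rpow_pos_of_pos hL0 p)
        exact Real.rpow_le_rpow hL0.le hkey (by positivity)
  -- mean value theorem
  have hmvt : ‖σ (t • (x' - b)) - σ (t • (x - b))‖ ≤ (C' / L^p) * ‖t • (x' - b) - t • (x - b)‖ := by
    apply Convex.norm_image_sub_le_of_norm_fderiv_le
      (fun z _ => hdiff.differentiableAt) hbound (convex_segment _ _)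
      (left_mem_segment ℝ _ _) (right_mem_segment ℝ _ _)
  have hnorm : ‖t • (x' - b) - t • (x - b)‖ = t * δ := by
    rw [← smul_sub, norm_smul, Real.norm_eq_abs, abs_of_nonneg ht0.le]
    congr 1
    rw [hδdef, ← norm_neg]
    congr 1; abel
  -- final computation
  have hLHS : |(2:ℝ)^k * σ ((2:ℝ)^((k:ℝ)/d) • (x - b)) - (2:ℝ)^k * σ ((2:ℝ)^((k:ℝ)/d) • (x' - b))|
      ≤ E * ((C' / L^p) * (t * δ)) := by
    rw [← mul_sub, abs_mul, hEz, abs_of_nonneg hE0.le]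
    apply mul_le_mul_of_nonneg_left _ hE0.le
    rw [← Real.norm_eq_abs, ← norm_neg, neg_sub]
    calc ‖σ (t • (x' - b)) - σ (t • (x - b))‖ ≤ (C' / L^p) * ‖t • (x' - b) - t • (x - b)‖ := hmvt
    _ = (C' / L^p) * (t * δ) := by rw [hnorm]
  refine le_trans hLHS (le_of_eq ?_)
  -- now prove the exact equality
  have hδd : ((δ^d : ℝ))^((1:ℝ)/d) = δ := by
    rw [← Real.rpow_natCast δ d, ← Real.rpow_mul hδ0, mul_one_div, div_self hdne, Real.rpow_one]
  have hsplit : (c*δ^d/D)^((1:ℝ)/d) = c^((1:ℝ)/d) * δ / D^((1:ℝ)/d) := by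
    rw [Real.div_rpow (by positivity) hD0.le, Real.mul_rpow hc.le (by positivity), hδd]
  have hLp : L^p = 2^(((k:ℝ) - d)*p) * (c^p)⁻¹ * D^p := by
    have hL2 : L = 2^((k:ℝ) - (d:ℝ)) * c⁻¹ * D := by
      rw [hLdef, hAD, hEdef, Real.rpow_sub two_pos, Real.rpow_natCast]; ring
    rw [hL2, Real.mul_rpow (by positivity) hD0.le,
      Real.mul_rpow (by positivity) (by positivity),
      ← Real.rpow_mul (by norm_num : (0:ℝ) ≤ 2), Real.inv_rpow hc.le]
  have e2 : (2:ℝ)^(1+(d:ℝ)*(1+ε)) * 2^(-(k:ℝ)*ε) = 2^((1:ℝ)+(d:ℝ)*(1+ε) + -(k:ℝ)*ε) := by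
    rw [← Real.rpow_add two_pos]
  have ec : c^((1:ℝ)+ε) * c^((1:ℝ)/d) = c^p := by
    rw [← Real.rpow_add hc, hpdef]
  have eD : D^((1:ℝ)/d) * D^((1:ℝ)+ε) = D^p := by
    rw [← Real.rpow_add hD0, hpdef]; ring_nf
  have hX : (1:ℝ)+(d:ℝ)*(1+ε) + -(k:ℝ)*ε = ((k:ℝ) + (k:ℝ)/d) - ((k:ℝ)-(d:ℝ))*p := by
    rw [hpdef]; field_simp; ring
  have hDp : D^p ≠ 0 := ne_of_gt (Real.rpow_pos_of_pos hD0 p)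
  have h2pn : (2:ℝ)^(((k:ℝ)-(d:ℝ))*p) ≠ 0 := ne_of_gt (Real.rpow_pos_of_pos two_pos _)
  have hcpn : c^p ≠ 0 := ne_of_gt (Real.rpow_pos_of_pos hc p)
  have hR : E * (C'/L^p * (t*δ)) =
      C' * δ * ((2:ℝ)^((k:ℝ)+(k:ℝ)/d) / 2^(((k:ℝ)-(d:ℝ))*p)) * c^p / D^p := by
    rw [hLp, hEdef, htdef, Real.rpow_add two_pos (k:ℝ) ((k:ℝ)/(d:ℝ))]
    field_simp
  rw [hR]
  symm
  calc (2:ℝ)^(1+(d:ℝ)*(1+ε)) * c^(1+ε) * C' * (c*δ^d/D)^((1:ℝ)/d) * (2^(-(k:ℝ)*ε)/D^(1+ε))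
      = C' * δ * ((2:ℝ)^(1+(d:ℝ)*(1+ε)) * 2^(-(k:ℝ)*ε)) * (c^((1:ℝ)+ε)*c^((1:ℝ)/d)) /
        (D^((1:ℝ)/d) * D^((1:ℝ)+ε)) := by rw [hsplit]; ring
    _ = C' * δ * (2:ℝ)^((1:ℝ)+(d:ℝ)*(1+ε) + -(k:ℝ)*ε) * c^p / D^p := by rw [e2, ec, eD]
    _ = C' * δ * (2:ℝ)^(((k:ℝ) + (k:ℝ)/d) - ((k:ℝ)-(d:ℝ))*p) * c^p / D^p := by rw [hX]
    _ = C' * δ * ((2:ℝ)^((k:ℝ)+(k:ℝ)/d) / 2^(((k:ℝ)-(d:ℝ))*p)) * c^p / D^p := by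
        rw [Real.rpow_sub two_pos]
end

section
/- Let σ : ℝ^d → ℝ be a twice-differentiable even function (σ(−x) = σ(x)) with ∫ σ = 1 and ‖∇^j σ(x)‖ ≤ C′/(c^{−1} + ‖x‖^d)^{1+ε+j/d} for j = 0, 1, 2 and all x ∈ ℝ^d, for some constants C′ > 0, c > 0, 0 < ε ≤ 1/d. Then the kernels S_k(x,b) = 2^k σ(2^{k/d}(x−b)), k ∈ ℤ, form a family of averaging kernels: they are symmetric, satisfy ∫ S_k(x,b) db = 1, the size estimate |S_k(x,b)| ≤ C·2^{−kε}/(2^{−k}+ρ(x,b))^{1+ε}, the Hölder continuity estimate with exponent η = 1/d, and the double Lipschitz condition, for some constant C depending only on c, d, ε, C′. -/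
/-!
Rescaling by `t = 2^{k/d}` gives `c⁻¹ + ‖t • v‖^d = (t^d / c) (2^{-k} + c‖v‖^d)`, so the decay of
`σ` and of its first two derivatives yields the size estimate directly, and the two regularity
estimates through the mean value inequality, applied once resp. twice. The smallness conditions on
`x - x'` and `b - b'` make this work: by the power-mean inequality, at every intermediate point the
denominator `2^{-k} + c‖·‖^d` is at least `3^{-d}` times its value at `x - b`, so the derivative
bounds there cost only a factor `(3^d)^{1+ε+j/d}`.
-/

open MeasureTheory

section MeanValue

variable {E F : Type*} [NormedAddCommGroup E] [NormedSpace ℝ E]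
  [NormedAddCommGroup F] [NormedSpace ℝ F]

lemma norm_sub_le_of_norm_fderiv_le_far {f : E → F} (hf : Differentiable ℝ f) {u p : E}
    {M : ℝ} (hM : ∀ y, ‖u‖ - ‖p‖ ≤ ‖y‖ → ‖fderiv ℝ f y‖ ≤ M) :
    ‖f u - f (u - p)‖ ≤ M * ‖p‖ := by
  have hseg : ∀ y ∈ segment ℝ (u - p) u, ‖fderiv ℝ f y‖ ≤ M := by
    intro y hy
    have hdist := dist_add_dist_of_mem_segment hy
    rw [dist_eq_norm, dist_eq_norm, dist_eq_norm, sub_sub_cancel_left, norm_neg] at hdist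
    refine hM y ?_
    linarith [norm_sub_norm_le u y, norm_sub_rev u y, norm_nonneg (u - p - y)]
  simpa using (convex_segment (u - p) u).norm_image_sub_le_of_norm_fderiv_le
    (fun y _ => hf y) hseg (left_mem_segment ℝ _ _) (right_mem_segment ℝ _ _)

lemma norm_second_diff_le_of_norm_fderiv_fderiv_le_far {f : E → F} (hf : Differentiable ℝ f)
    (hf' : Differentiable ℝ (fderiv ℝ f)) {u p q : E} {M : ℝ}
    (hM : ∀ y, ‖u‖ - ‖p‖ - ‖q‖ ≤ ‖y‖ → ‖fderiv ℝ (fderiv ℝ f) y‖ ≤ M) :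
    ‖f u - f (u - p) - f (u - q) + f (u - p - q)‖ ≤ M * ‖p‖ * ‖q‖ := by
  have hshift : ∀ z, DifferentiableAt ℝ (fun z => f (z - q)) z :=
    fun z => (differentiableAt_comp_sub q).2 (hf _)
  have hg : Differentiable ℝ fun z => f z - f (z - q) := fun z => (hf z).sub (hshift z)
  have hgM : ∀ z, ‖u‖ - ‖p‖ ≤ ‖z‖ → ‖fderiv ℝ (fun z => f z - f (z - q)) z‖ ≤ M * ‖q‖ :=
    fun z hz => by
      rw [fderiv_fun_sub (hf z) (hshift z), fderiv_comp_sub]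
      exact norm_sub_le_of_norm_fderiv_le_far hf' fun y hy => hM y (by linarith)
  calc ‖f u - f (u - p) - f (u - q) + f (u - p - q)‖
      = ‖(f u - f (u - q)) - (f (u - p) - f (u - p - q))‖ := by congr 1; abel
    _ ≤ M * ‖q‖ * ‖p‖ := norm_sub_le_of_norm_fderiv_le_far hg hgM
    _ = M * ‖p‖ * ‖q‖ := mul_right_comm _ _ _

end MeanValue

lemma add_mul_pow_le_three_pow_mul {d : ℕ} (hd : 1 ≤ d) {δ c r w h₁ h₂ : ℝ} (hδ : 0 ≤ δ)
    (hc : 0 ≤ c) (hr : 0 ≤ r) (hw : 0 ≤ w) (hh₁ : 0 ≤ h₁) (hh₂ : 0 ≤ h₂)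
    (hrw : r ≤ w + h₁ + h₂)
    (hle₁ : c * h₁ ^ d ≤ (3 : ℝ) ^ (-(d : ℤ)) * (δ + c * r ^ d))
    (hle₂ : c * h₂ ^ d ≤ (3 : ℝ) ^ (-(d : ℤ)) * (δ + c * r ^ d)) :
    δ + c * r ^ d ≤ 3 ^ d * (δ + c * w ^ d) := by
  obtain ⟨n, rfl⟩ : ∃ n, d = n + 1 := ⟨d - 1, by omega⟩
  have hjensen : r ^ (n + 1) ≤ 3 ^ n * (w ^ (n + 1) + h₁ ^ (n + 1) + h₂ ^ (n + 1)) := by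
    calc r ^ (n + 1) ≤ (w + h₁ + h₂) ^ (n + 1) := pow_le_pow_left₀ hr hrw _
      _ ≤ _ := by
        simpa [Fin.sum_univ_three] using pow_sum_le_card_mul_sum_pow (s := Finset.univ)
          (f := ![w, h₁, h₂]) (by simp [Fin.forall_fin_succ, hw, hh₁, hh₂]) n
  set X := δ + c * r ^ (n + 1) with hX
  have h3 : (3 : ℝ) ^ (-((n + 1 : ℕ) : ℤ)) = (3 ^ n * 3)⁻¹ := by
    rw [zpow_neg, zpow_natCast, pow_succ]
  rw [h3] at hle₁ hle₂
  have hsmall : ∀ h : ℝ, c * h ^ (n + 1) ≤ (3 ^ n * 3)⁻¹ * X →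
      3 ^ n * (c * h ^ (n + 1)) ≤ X / 3 := fun h hh => by
    calc 3 ^ n * (c * h ^ (n + 1)) ≤ 3 ^ n * ((3 ^ n * 3)⁻¹ * X) := by gcongr
      _ = X / 3 := by field_simp
  have hcr := mul_le_mul_of_nonneg_left hjensen hc
  have hδ3 := mul_le_mul_of_nonneg_right (one_le_pow₀ (by norm_num) : (1 : ℝ) ≤ 3 ^ n) hδ
  rw [pow_succ]
  linarith [hsmall h₁ hle₁, hsmall h₂ hle₂]

lemma norm_le_of_decay_of_far {E G : Type*} [NormedAddCommGroup E] [Norm G] {d : ℕ}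
    {C' c α : ℝ} (hd : 1 ≤ d) (hC' : 0 ≤ C') (hc : 0 < c) {g : E → G}
    (hg : ∀ y, ‖g y‖ ≤ C' / (c⁻¹ + ‖y‖ ^ d) ^ α) (hα : 0 ≤ α) {u p q : E}
    (hp : c * ‖p‖ ^ d ≤ (3 : ℝ) ^ (-(d : ℤ)) * (1 + c * ‖u‖ ^ d))
    (hq : c * ‖q‖ ^ d ≤ (3 : ℝ) ^ (-(d : ℤ)) * (1 + c * ‖u‖ ^ d))
    (y : E) (hy : ‖u‖ - ‖p‖ - ‖q‖ ≤ ‖y‖) :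
    ‖g y‖ ≤ C' / ((1 + c * ‖u‖ ^ d) / (c * 3 ^ d)) ^ α := by
  have hfar := add_mul_pow_le_three_pow_mul hd zero_le_one hc.le (norm_nonneg u)
    (norm_nonneg y) (norm_nonneg p) (norm_nonneg q) (by linarith) hp hq
  have hlow : (1 + c * ‖u‖ ^ d) / (c * 3 ^ d) ≤ c⁻¹ + ‖y‖ ^ d := by
    rw [div_le_iff₀ (by positivity)]
    calc 1 + c * ‖u‖ ^ d ≤ 3 ^ d * (1 + c * ‖y‖ ^ d) := hfar
      _ = (c⁻¹ + ‖y‖ ^ d) * (c * 3 ^ d) := by field_simp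
  exact (hg y).trans (by gcongr)

noncomputable def averagingConst (d : ℕ) (C' c ε : ℝ) : ℝ :=
  C' * c ^ (1 + ε) * ((3 : ℝ) ^ d) ^ (1 + ε + 2 / d)

lemma dilated_decay_eq {d : ℕ} (hd : d ≠ 0) {C' c ε t D T : ℝ} (hc : 0 < c) (ht : 0 < t)
    (hD : 0 < D) (hT : 0 < T) (j : ℕ) :
    t ^ d * t ^ j * (C' / (t ^ d * D / (c * T)) ^ (1 + ε + j / d)) =
      C' * c ^ (1 + ε) * T ^ (1 + ε + j / d) * ((c / D) ^ (1 / d : ℝ)) ^ j *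
        ((t ^ d) ^ (-ε) / D ^ (1 + ε)) := by
  have hdj : ∀ z : ℝ, 0 < z → (z ^ (1 / d : ℝ)) ^ j = z ^ (j / d : ℝ) := fun z hz => by
    rw [← Real.rpow_natCast, ← Real.rpow_mul hz.le, one_div_mul_eq_div]
  have htj : (t ^ d) ^ (j / d : ℝ) = t ^ j := by
    rw [← Real.rpow_natCast t d, ← Real.rpow_mul ht.le, mul_div_cancel₀ _ (by exact_mod_cast hd),
      Real.rpow_natCast]
  have hsplit : ∀ z : ℝ, 0 < z → z ^ (1 + ε + j / d) = z * z ^ ε * z ^ (j / d : ℝ) :=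
    fun z hz => by rw [Real.rpow_add hz, Real.rpow_add hz, Real.rpow_one]
  have htd : 0 < t ^ d := pow_pos ht d
  rw [hdj _ (div_pos hc hD), Real.div_rpow hc.le hD.le,
    Real.div_rpow (by positivity) (by positivity), Real.mul_rpow htd.le hD.le,
    Real.mul_rpow hc.le hT.le, hsplit _ htd, htj, hsplit c hc, hsplit D hD, Real.rpow_neg htd.le,
    Real.rpow_add hc, Real.rpow_add hD, Real.rpow_one, Real.rpow_one]
  field_simp

lemma dilated_decay_le_averagingConst {d : ℕ} (hd : d ≠ 0) {C' c ε t D : ℝ} (hC' : 0 ≤ C')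
    (hc : 0 < c) (ht : 0 < t) (hD : 0 < D) {j : ℕ} (hj : j ≤ 2) :
    t ^ d * t ^ j * (C' / (t ^ d * D / (c * 3 ^ d)) ^ (1 + ε + j / d)) ≤
      averagingConst d C' c ε * ((c / D) ^ (1 / d : ℝ)) ^ j * ((t ^ d) ^ (-ε) / D ^ (1 + ε)) := by
  rw [dilated_decay_eq hd hc ht hD (by positivity), averagingConst]
  have hexp : (1 + ε + j / d : ℝ) ≤ 1 + ε + 2 / d := by
    gcongr
    exact_mod_cast hj
  have hT : ((3 : ℝ) ^ d) ^ (1 + ε + j / d) ≤ ((3 : ℝ) ^ d) ^ (1 + ε + 2 / d) :=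
    Real.rpow_le_rpow_of_exponent_le (one_le_pow₀ (by norm_num)) hexp
  gcongr

lemma mul_pow_div_rpow_one_div {d : ℕ} (hd : d ≠ 0) {c D h : ℝ} (hc : 0 ≤ c) (hD : 0 ≤ D)
    (hh : 0 ≤ h) : (c * h ^ d / D) ^ (1 / d : ℝ) = (c / D) ^ (1 / d : ℝ) * h := by
  rw [mul_div_right_comm, Real.mul_rpow (div_nonneg hc hD) (by positivity), one_div,
    Real.pow_rpow_inv_natCast hh hd]

section Dilation

variable {E : Type*} [NormedAddCommGroup E] [NormedSpace ℝ E] {d : ℕ} {σ : E → ℝ}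
  {C' c ε t : ℝ}

lemma one_add_mul_norm_smul_pow (ht : 0 < t) (v : E) :
    1 + c * ‖t • v‖ ^ d = t ^ d * ((t ^ d)⁻¹ + c * ‖v‖ ^ d) := by
  rw [norm_smul, Real.norm_of_nonneg ht.le, mul_pow, mul_add, mul_inv_cancel₀ (by positivity)]
  ring

lemma mul_norm_smul_pow_le (ht : 0 < t) {h v : E}
    (hh : c * ‖h‖ ^ d ≤ (3 : ℝ) ^ (-(d : ℤ)) * ((t ^ d)⁻¹ + c * ‖v‖ ^ d)) :
    c * ‖t • h‖ ^ d ≤ (3 : ℝ) ^ (-(d : ℤ)) * (1 + c * ‖t • v‖ ^ d) := by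
  rw [one_add_mul_norm_smul_pow ht, norm_smul, Real.norm_of_nonneg ht.le, mul_pow, mul_left_comm,
    mul_left_comm _ (t ^ d)]
  exact mul_le_mul_of_nonneg_left hh (by positivity)

lemma abs_pow_mul_dilation_le (hd : 1 ≤ d) (hC' : 0 ≤ C') (hc : 0 < c) (hε : 0 ≤ ε)
    (hσ : ∀ y, ‖σ y‖ ≤ C' / (c⁻¹ + ‖y‖ ^ d) ^ (1 + ε)) (ht : 0 < t) (x b : E) :
    |t ^ d * σ (t • (x - b))| ≤
      averagingConst d C' c ε * (t ^ d) ^ (-ε) / ((t ^ d)⁻¹ + c * ‖x - b‖ ^ d) ^ (1 + ε) := by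
  have hzero : c * ‖(0 : E)‖ ^ d ≤ (3 : ℝ) ^ (-(d : ℤ)) * (1 + c * ‖t • (x - b)‖ ^ d) := by
    rw [norm_zero, zero_pow (by omega), mul_zero]
    positivity
  have hσu :=
    norm_le_of_decay_of_far hd hC' hc hσ (by positivity) hzero hzero (t • (x - b)) (by simp)
  rw [one_add_mul_norm_smul_pow ht] at hσu
  calc |t ^ d * σ (t • (x - b))| = t ^ d * t ^ 0 * ‖σ (t • (x - b))‖ := by
        rw [abs_mul, abs_of_pos (by positivity), pow_zero, mul_one, Real.norm_eq_abs]
    _ ≤ t ^ d * t ^ 0 * (C' / (t ^ d * ((t ^ d)⁻¹ + c * ‖x - b‖ ^ d) / (c * 3 ^ d)) ^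
          (1 + ε + (0 : ℕ) / d)) := by
        gcongr
        simpa using hσu
    _ ≤ _ := dilated_decay_le_averagingConst (by omega) hC' hc ht (by positivity) (by norm_num)
    _ = _ := by rw [pow_zero, mul_one, mul_div_assoc]

lemma abs_pow_mul_dilation_sub_le (hd : 1 ≤ d) (hC' : 0 ≤ C') (hc : 0 < c) (hε : 0 ≤ ε)
    (hσ : Differentiable ℝ σ)
    (hσ₁ : ∀ y, ‖fderiv ℝ σ y‖ ≤ C' / (c⁻¹ + ‖y‖ ^ d) ^ (1 + ε + 1 / d)) (ht : 0 < t)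
    {x x' b : E} (hx : c * ‖x - x'‖ ^ d ≤ (3 : ℝ) ^ (-(d : ℤ)) * ((t ^ d)⁻¹ + c * ‖x - b‖ ^ d)) :
    |t ^ d * σ (t • (x - b)) - t ^ d * σ (t • (x' - b))| ≤
      averagingConst d C' c ε * (c * ‖x - x'‖ ^ d / ((t ^ d)⁻¹ + c * ‖x - b‖ ^ d)) ^ (1 / d : ℝ) *
        ((t ^ d) ^ (-ε) / ((t ^ d)⁻¹ + c * ‖x - b‖ ^ d) ^ (1 + ε)) := by
  set D := (t ^ d)⁻¹ + c * ‖x - b‖ ^ d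
  have hD : 0 < D := by positivity
  have hzero : c * ‖(0 : E)‖ ^ d ≤ (3 : ℝ) ^ (-(d : ℤ)) * (1 + c * ‖t • (x - b)‖ ^ d) := by
    rw [norm_zero, zero_pow (by omega), mul_zero]
    positivity
  have hdiff := norm_sub_le_of_norm_fderiv_le_far hσ (u := t • (x - b)) (p := t • (x - x'))
    fun y hy => norm_le_of_decay_of_far hd hC' hc hσ₁ (by positivity) (mul_norm_smul_pow_le ht hx)
      hzero y (by simpa using hy)
  rw [one_add_mul_norm_smul_pow ht, ← smul_sub, sub_sub_sub_cancel_left, norm_smul,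
    Real.norm_of_nonneg ht.le] at hdiff
  calc |t ^ d * σ (t • (x - b)) - t ^ d * σ (t • (x' - b))|
      = t ^ d * ‖σ (t • (x - b)) - σ (t • (x' - b))‖ := by
        rw [← mul_sub, abs_mul, abs_of_pos (by positivity), Real.norm_eq_abs]
    _ ≤ t ^ d * (C' / (t ^ d * D / (c * 3 ^ d)) ^ (1 + ε + 1 / d) * (t * ‖x - x'‖)) := by
        gcongr
    _ = t ^ d * t ^ 1 * (C' / (t ^ d * D / (c * 3 ^ d)) ^ (1 + ε + (1 : ℕ) / d)) * ‖x - x'‖ := by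
        push_cast
        ring
    _ ≤ averagingConst d C' c ε * ((c / D) ^ (1 / d : ℝ)) ^ 1 * ((t ^ d) ^ (-ε) / D ^ (1 + ε)) *
          ‖x - x'‖ :=
        mul_le_mul_of_nonneg_right
          (dilated_decay_le_averagingConst (j := 1) (by omega) hC' hc ht hD (by norm_num))
          (norm_nonneg _)
    _ = _ := by
        rw [mul_pow_div_rpow_one_div (by omega) hc.le hD.le (norm_nonneg _)]
        ring

lemma abs_pow_mul_dilation_second_diff_le (hd : 1 ≤ d) (hC' : 0 ≤ C') (hc : 0 < c)
    (hε : 0 ≤ ε) (hσ : Differentiable ℝ σ) (hσ' : Differentiable ℝ (fderiv ℝ σ))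
    (hσ₂ : ∀ y, ‖fderiv ℝ (fderiv ℝ σ) y‖ ≤ C' / (c⁻¹ + ‖y‖ ^ d) ^ (1 + ε + 2 / d))
    (ht : 0 < t) {x x' b b' : E}
    (hx : c * ‖x - x'‖ ^ d ≤ (3 : ℝ) ^ (-(d : ℤ)) * ((t ^ d)⁻¹ + c * ‖x - b‖ ^ d))
    (hb : c * ‖b - b'‖ ^ d ≤ (3 : ℝ) ^ (-(d : ℤ)) * ((t ^ d)⁻¹ + c * ‖x - b‖ ^ d)) :
    |t ^ d * σ (t • (x - b)) - t ^ d * σ (t • (x' - b)) - t ^ d * σ (t • (x - b')) +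
        t ^ d * σ (t • (x' - b'))| ≤
      averagingConst d C' c ε * (c * ‖x - x'‖ ^ d / ((t ^ d)⁻¹ + c * ‖x - b‖ ^ d)) ^ (1 / d : ℝ) *
        (c * ‖b - b'‖ ^ d / ((t ^ d)⁻¹ + c * ‖x - b‖ ^ d)) ^ (1 / d : ℝ) *
        ((t ^ d) ^ (-ε) / ((t ^ d)⁻¹ + c * ‖x - b‖ ^ d) ^ (1 + ε)) := by
  set D := (t ^ d)⁻¹ + c * ‖x - b‖ ^ d
  have hD : 0 < D := by positivity
  rw [norm_sub_rev] at hb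
  have hfar := norm_le_of_decay_of_far hd hC' hc hσ₂ (by positivity) (mul_norm_smul_pow_le ht hx)
      (mul_norm_smul_pow_le ht hb)
  have hdiff := norm_second_diff_le_of_norm_fderiv_fderiv_le_far hσ hσ' hfar
  rw [one_add_mul_norm_smul_pow ht] at hdiff
  simp only [← smul_sub, sub_sub_sub_cancel_left,
    sub_sub_sub_cancel_right, norm_smul, Real.norm_of_nonneg ht.le, norm_sub_rev b' b] at hdiff
  calc |t ^ d * σ (t • (x - b)) - t ^ d * σ (t • (x' - b)) - t ^ d * σ (t • (x - b')) +
        t ^ d * σ (t • (x' - b'))|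
      = t ^ d * ‖σ (t • (x - b)) - σ (t • (x' - b)) - σ (t • (x - b')) + σ (t • (x' - b'))‖ := by
        rw [← mul_sub, ← mul_sub, ← mul_add, abs_mul, abs_of_pos (by positivity),
          Real.norm_eq_abs]
    _ ≤ t ^ d * (C' / (t ^ d * D / (c * 3 ^ d)) ^ (1 + ε + 2 / d) * (t * ‖x - x'‖) *
          (t * ‖b - b'‖)) := by
        gcongr
    _ = t ^ d * t ^ 2 * (C' / (t ^ d * D / (c * 3 ^ d)) ^ (1 + ε + (2 : ℕ) / d)) *
          (‖x - x'‖ * ‖b - b'‖) := by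
        push_cast
        ring
    _ ≤ averagingConst d C' c ε * ((c / D) ^ (1 / d : ℝ)) ^ 2 * ((t ^ d) ^ (-ε) / D ^ (1 + ε)) *
          (‖x - x'‖ * ‖b - b'‖) :=
        mul_le_mul_of_nonneg_right
          (dilated_decay_le_averagingConst (j := 2) (by omega) hC' hc ht hD le_rfl)
          (by positivity)
    _ = _ := by
        rw [mul_pow_div_rpow_one_div (by omega) hc.le hD.le (norm_nonneg _),
          mul_pow_div_rpow_one_div (by omega) hc.le hD.le (norm_nonneg _)]
        ring

lemma integral_pow_finrank_mul_dilation [MeasurableSpace E] [BorelSpace E] [FiniteDimensional ℝ E]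
    (μ : Measure E) [μ.IsAddHaarMeasure] (σ : E → ℝ) (ht : 0 < t) (x : E) :
    ∫ b, t ^ Module.finrank ℝ E * σ (t • (x - b)) ∂μ = ∫ y, σ y ∂μ := by
  rw [integral_const_mul, integral_sub_left_eq_self (fun u => σ (t • u)) μ x,
    Measure.integral_comp_smul_of_nonneg μ σ t (hR := ht.le), smul_eq_mul, ← mul_assoc,
    mul_inv_cancel₀ (by positivity), one_mul]

end Dilation

lemma two_zpow_eq_rpow_div_pow {d : ℕ} (hd : d ≠ 0) (k : ℤ) (ε : ℝ) :
    (2 : ℝ) ^ k = ((2 : ℝ) ^ ((k : ℝ) / d)) ^ d ∧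
      (2 : ℝ) ^ (-k) = (((2 : ℝ) ^ ((k : ℝ) / d)) ^ d)⁻¹ ∧
      (2 : ℝ) ^ (-(k : ℝ) * ε) = (((2 : ℝ) ^ ((k : ℝ) / d)) ^ d) ^ (-ε) := by
  have hpow : ((2 : ℝ) ^ ((k : ℝ) / d)) ^ d = 2 ^ k := by
    rw [← Real.rpow_natCast, ← Real.rpow_mul zero_le_two, div_mul_cancel₀ _ (by exact_mod_cast hd),
      Real.rpow_intCast]
  refine ⟨hpow.symm, by rw [hpow, zpow_neg], ?_⟩
  rw [hpow, ← Real.rpow_intCast, ← Real.rpow_mul zero_le_two, neg_mul_comm]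

theorem stmt_6_general (d : ℕ) (hd : 1 ≤ d) (σ : EuclideanSpace ℝ (Fin d) → ℝ)
    (C' c ε : ℝ) (hC' : 0 < C') (hc : 0 < c) (hε : 0 < ε)
    (hsmooth : ContDiff ℝ 2 σ)
    (heven : ∀ x, σ (-x) = σ x)
    (hnorm : ∫ x, σ x = 1)
    (hdecay : ∀ j ≤ 2, ∀ x, ‖iteratedFDeriv ℝ j σ x‖ ≤
      C' / (c⁻¹ + ‖x‖ ^ d) ^ (1 + ε + (j : ℝ) / d)) :
    -- S_k(x,b) = 2^k σ(2^{k/d}(x-b)),  ρ(x,b) = c‖x-b‖^d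
    ∃ C : ℝ, 0 < C ∧
      (∀ (S : ℤ → EuclideanSpace ℝ (Fin d) → EuclideanSpace ℝ (Fin d) → ℝ),
        (∀ k x b, S k x b = (2 : ℝ) ^ k * σ ((2 : ℝ) ^ ((k : ℝ) / d) • (x - b))) →
        -- symmetry
        (∀ k x b, S k x b = S k b x) ∧
        -- (C1)
        (∀ k x, ∫ b, S k x b = 1) ∧
        -- (C2)
        (∀ k x b, |S k x b| ≤
          C * (2 : ℝ) ^ (-(k : ℝ) * ε) / ((2 : ℝ) ^ (-k) + c * ‖x - b‖ ^ d) ^ (1 + ε)) ∧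
        -- (C3), with A = 3^d / 2, η = 1/d
        (∀ k x x' b,
          c * ‖x - x'‖ ^ d ≤ (3 : ℝ) ^ (-(d : ℤ)) * ((2 : ℝ) ^ (-k) + c * ‖x - b‖ ^ d) →
          |S k x b - S k x' b| ≤
            C * (c * ‖x - x'‖ ^ d / ((2 : ℝ) ^ (-k) + c * ‖x - b‖ ^ d)) ^ ((1 : ℝ) / d) *
              ((2 : ℝ) ^ (-(k : ℝ) * ε) / ((2 : ℝ) ^ (-k) + c * ‖x - b‖ ^ d) ^ (1 + ε))) ∧
        -- (C4) double Lipschitz condition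
        (∀ k x x' b b',
          c * ‖x - x'‖ ^ d ≤ (3 : ℝ) ^ (-(d : ℤ)) * ((2 : ℝ) ^ (-k) + c * ‖x - b‖ ^ d) →
          c * ‖b - b'‖ ^ d ≤ (3 : ℝ) ^ (-(d : ℤ)) * ((2 : ℝ) ^ (-k) + c * ‖x - b‖ ^ d) →
          |S k x b - S k x' b - S k x b' + S k x' b'| ≤
            C * (c * ‖x - x'‖ ^ d / ((2 : ℝ) ^ (-k) + c * ‖x - b‖ ^ d)) ^ ((1 : ℝ) / d) *
              (c * ‖b - b'‖ ^ d / ((2 : ℝ) ^ (-k) + c * ‖x - b‖ ^ d)) ^ ((1 : ℝ) / d) *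
              ((2 : ℝ) ^ (-(k : ℝ) * ε) / ((2 : ℝ) ^ (-k) + c * ‖x - b‖ ^ d) ^ (1 + ε)))) := by
  have hd₀ : d ≠ 0 := by omega
  have hσ : Differentiable ℝ σ := hsmooth.differentiable (by norm_num)
  have hσ' : Differentiable ℝ (fderiv ℝ σ) :=
    (hsmooth.fderiv_right (m := 1) (by norm_num)).differentiable (by norm_num)
  have hσ₀ : ∀ y, ‖σ y‖ ≤ C' / (c⁻¹ + ‖y‖ ^ d) ^ (1 + ε) := by
    simpa using hdecay 0 (by norm_num)
  have hσ₁ : ∀ y, ‖fderiv ℝ σ y‖ ≤ C' / (c⁻¹ + ‖y‖ ^ d) ^ (1 + ε + 1 / d) := by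
    simpa using hdecay 1 (by norm_num)
  have hσ₂ : ∀ y, ‖fderiv ℝ (fderiv ℝ σ) y‖ ≤ C' / (c⁻¹ + ‖y‖ ^ d) ^ (1 + ε + 2 / d) := fun y => by
    simpa [← norm_iteratedFDeriv_one, norm_iteratedFDeriv_fderiv] using hdecay 2 le_rfl y
  refine ⟨averagingConst d C' c ε, by unfold averagingConst; positivity, fun S hS => ?_⟩
  have ht : ∀ k : ℤ, 0 < (2 : ℝ) ^ ((k : ℝ) / d) := fun k => by positivity
  refine ⟨fun k x b => ?_, fun k x => ?_, fun k x b => ?_, fun k x x' b hx => ?_,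
    fun k x x' b b' hx hb => ?_⟩ <;>
  obtain ⟨hk, hnegk, hkε⟩ := two_zpow_eq_rpow_div_pow hd₀ k ε <;>
  simp only [hS, hk, hnegk, hkε] at *
  · rw [← neg_sub x b, smul_neg, heven]
  · simpa [hnorm] using integral_pow_finrank_mul_dilation volume σ (ht k) x
  · exact abs_pow_mul_dilation_le hd hC'.le hc hε.le hσ₀ (ht k) x b
  · exact abs_pow_mul_dilation_sub_le hd hC'.le hc hε.le hσ hσ₁ (ht k) hx
  · exact abs_pow_mul_dilation_second_diff_le hd hC'.le hc hε.le hσ hσ' hσ₂ (ht k) hx hb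

theorem stmt_6 (d : ℕ) (hd : 1 ≤ d) (σ : EuclideanSpace ℝ (Fin d) → ℝ)
    (C' c ε : ℝ) (hC' : 0 < C') (hc : 0 < c) (hε : 0 < ε) (hεd : ε ≤ 1 / d)
    (hsmooth : ContDiff ℝ 2 σ)
    (heven : ∀ x, σ (-x) = σ x)
    (hint : Integrable σ) (hnorm : ∫ x, σ x = 1)
    (hdecay : ∀ j ≤ 2, ∀ x, ‖iteratedFDeriv ℝ j σ x‖ ≤
      C' / (c⁻¹ + ‖x‖ ^ d) ^ (1 + ε + (j : ℝ) / d)) :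
    -- S_k(x,b) = 2^k σ(2^{k/d}(x-b)),  ρ(x,b) = c‖x-b‖^d
    ∃ C : ℝ, 0 < C ∧
      (∀ (S : ℤ → EuclideanSpace ℝ (Fin d) → EuclideanSpace ℝ (Fin d) → ℝ),
        (∀ k x b, S k x b = (2 : ℝ) ^ k * σ ((2 : ℝ) ^ ((k : ℝ) / d) • (x - b))) →
        -- symmetry
        (∀ k x b, S k x b = S k b x) ∧
        -- (C1)
        (∀ k x, ∫ b, S k x b = 1) ∧
        -- (C2)
        (∀ k x b, |S k x b| ≤
          C * (2 : ℝ) ^ (-(k : ℝ) * ε) / ((2 : ℝ) ^ (-k) + c * ‖x - b‖ ^ d) ^ (1 + ε)) ∧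
        -- (C3), with A = 3^d / 2, η = 1/d
        (∀ k x x' b,
          c * ‖x - x'‖ ^ d ≤ (3 : ℝ) ^ (-(d : ℤ)) * ((2 : ℝ) ^ (-k) + c * ‖x - b‖ ^ d) →
          |S k x b - S k x' b| ≤
            C * (c * ‖x - x'‖ ^ d / ((2 : ℝ) ^ (-k) + c * ‖x - b‖ ^ d)) ^ ((1 : ℝ) / d) *
              ((2 : ℝ) ^ (-(k : ℝ) * ε) / ((2 : ℝ) ^ (-k) + c * ‖x - b‖ ^ d) ^ (1 + ε))) ∧
        -- (C4) double Lipschitz condition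
        (∀ k x x' b b',
          c * ‖x - x'‖ ^ d ≤ (3 : ℝ) ^ (-(d : ℤ)) * ((2 : ℝ) ^ (-k) + c * ‖x - b‖ ^ d) →
          c * ‖b - b'‖ ^ d ≤ (3 : ℝ) ^ (-(d : ℤ)) * ((2 : ℝ) ^ (-k) + c * ‖x - b‖ ^ d) →
          |S k x b - S k x' b - S k x b' + S k x' b'| ≤
            C * (c * ‖x - x'‖ ^ d / ((2 : ℝ) ^ (-k) + c * ‖x - b‖ ^ d)) ^ ((1 : ℝ) / d) *
              (c * ‖b - b'‖ ^ d / ((2 : ℝ) ^ (-k) + c * ‖x - b‖ ^ d)) ^ ((1 : ℝ) / d) *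
              ((2 : ℝ) ^ (-(k : ℝ) * ε) / ((2 : ℝ) ^ (-k) + c * ‖x - b‖ ^ d) ^ (1 + ε)))) :=
  stmt_6_general d hd σ C' c ε hC' hc hε hsmooth heven hnorm hdecay
end

section
/- Let σ : ℝ → ℝ be defined by σ(x) = C_m · σ̃(x) · sin(m x), where σ̃ is an odd, twice-differentiable function equal to 1/x^α for |x| > 1 with α > 3 and bounded with bounded first and second derivatives on [−1,1]. Then σ is even, and there is a constant C′ > 0 such that |σ^{(j)}(x)| ≤ C′/(c^{−1} + |x|)^{1+ε+j} for j = 0,1,2, all x ∈ ℝ, with ε = min(1, α−3) and any fixed c > 0. -/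
/-!
σ is even as a product of two odd functions, and the derivatives of an even function have
even absolute value, so it suffices to bound them for `x ≥ 0`. On `[0, 1]` they are bounded by
continuity. For `x > 1`, σ is `C_m x^{-α} sin (m x)`, whose derivatives are `O(x^{-α})` by the
Leibniz rule; since `1 + ε + j ≤ α`, this decay beats `(c⁻¹ + x)^{-(1 + ε + j)}`.
-/

open Real Set Filter Topology

theorem Function.Even.norm_iteratedDeriv_neg {𝕜 F : Type*} [NontriviallyNormedField 𝕜]
    [NormedAddCommGroup F] [NormedSpace 𝕜 F] {f : 𝕜 → F} (hf : f.Even) (n : ℕ) (x : 𝕜) :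
    ‖iteratedDeriv n f (-x)‖ = ‖iteratedDeriv n f x‖ := by
  have h := iteratedDeriv_comp_neg n f (-x)
  rw [show (fun y ↦ f (-y)) = f from funext hf, neg_neg] at h
  rw [h, norm_smul, norm_pow, norm_neg, norm_one, one_pow, one_mul]

theorem Function.Even.norm_iteratedDeriv_abs {F : Type*} [NormedAddCommGroup F] [NormedSpace ℝ F]
    {f : ℝ → F} (hf : f.Even) (n : ℕ) (x : ℝ) :
    ‖iteratedDeriv n f |x|‖ = ‖iteratedDeriv n f x‖ := by
  rcases abs_choice x with h | h <;> rw [h]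
  exact hf.norm_iteratedDeriv_neg n x

theorem ContDiff.exists_bound_iteratedDeriv_of_isCompact {F : Type*} [NormedAddCommGroup F]
    [NormedSpace ℝ F] {f : ℝ → F} {n : ℕ} (hf : ContDiff ℝ n f) {s : Set ℝ} (hs : IsCompact s) :
    ∃ M, ∀ j ≤ n, ∀ x ∈ s, ‖iteratedDeriv j f x‖ ≤ M := by
  have hcont : Continuous fun x ↦ ∑ j ∈ Finset.range (n + 1), ‖iteratedDeriv j f x‖ :=
    continuous_finsetSum _ fun j hj ↦
      (hf.continuous_iteratedDeriv j (by exact_mod_cast Finset.mem_range_succ_iff.mp hj)).norm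
  obtain ⟨M, hM⟩ := hs.exists_bound_of_continuousOn hcont.continuousOn
  refine ⟨M, fun j hj x hx ↦ le_trans ?_ ((le_abs_self _).trans (hM x hx))⟩
  exact Finset.single_le_sum (f := fun j ↦ ‖iteratedDeriv j f x‖) (fun _ _ ↦ norm_nonneg _)
    (Finset.mem_range_succ_iff.mpr hj)

theorem abs_descPochhammer_eval_neg_le {α : ℝ} (hα : 0 ≤ α) (n : ℕ) :
    |(descPochhammer ℝ n).eval (-α)| ≤ (α + n) ^ n := by
  rw [descPochhammer_eval_eq_prod_range, Finset.abs_prod]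
  calc ∏ j ∈ Finset.range n, |-α - j| ≤ ∏ _j ∈ Finset.range n, (α + n) := by
        refine Finset.prod_le_prod (fun _ _ ↦ abs_nonneg _) fun j hj ↦ ?_
        have : (j : ℝ) ≤ n := by exact_mod_cast (Finset.mem_range.mp hj).le
        rw [abs_of_nonpos (by linarith)]
        linarith
    _ = (α + n) ^ n := by rw [Finset.prod_const, Finset.card_range]

theorem abs_iteratedDeriv_rpow_neg_le {α x : ℝ} (hα : 0 ≤ α) (hx : 1 ≤ x) (n : ℕ) :
    |iteratedDeriv n (fun y : ℝ ↦ y ^ (-α)) x| ≤ (α + n) ^ n * x ^ (-α) := by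
  rw [iteratedDeriv_eq_iterate, iter_deriv_rpow_const, abs_mul,
    abs_of_pos (rpow_pos_of_pos (by linarith) _)]
  gcongr
  · exact abs_descPochhammer_eval_neg_le hα n
  · linarith [n.cast_nonneg (α := ℝ)]

theorem abs_iteratedDeriv_sin_const_mul_le (m x : ℝ) (n : ℕ) :
    |iteratedDeriv n (fun y ↦ sin (m * y)) x| ≤ |m| ^ n := by
  rw [iteratedDeriv_comp_const_mul contDiff_sin, abs_mul, abs_pow]
  exact mul_le_of_le_one_right (by positivity) (abs_iteratedDeriv_sin_le_one n _)

theorem abs_iteratedDeriv_rpow_neg_mul_sin_le {α x : ℝ} (hα : 0 ≤ α) (hx : 1 ≤ x) (m : ℝ)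
    (n : ℕ) :
    |iteratedDeriv n (fun y ↦ y ^ (-α) * sin (m * y)) x| ≤ (α + n + |m|) ^ n * x ^ (-α) := by
  have hrpow : ContDiffAt ℝ n (fun y : ℝ ↦ y ^ (-α)) x :=
    contDiffAt_rpow_const_of_ne (by linarith)
  have hsin : ContDiffAt ℝ n (fun y ↦ sin (m * y)) x :=
    (contDiff_sin.comp (contDiff_const.mul contDiff_id)).contDiffAt
  rw [iteratedDeriv_fun_mul hrpow hsin, add_pow, Finset.sum_mul]
  refine (Finset.abs_sum_le_sum_abs _ _).trans (Finset.sum_le_sum fun i hi ↦ ?_)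
  have hi : (i : ℝ) ≤ n := by exact_mod_cast Finset.mem_range_succ_iff.mp hi
  rw [abs_mul, abs_mul, Nat.abs_cast]
  calc (n.choose i : ℝ) * |iteratedDeriv i (fun y : ℝ ↦ y ^ (-α)) x|
        * |iteratedDeriv (n - i) (fun y ↦ sin (m * y)) x|
      ≤ n.choose i * ((α + i) ^ i * x ^ (-α)) * |m| ^ (n - i) := by
        gcongr
        · exact abs_iteratedDeriv_rpow_neg_le hα hx i
        · exact abs_iteratedDeriv_sin_const_mul_le m x (n - i)
    _ ≤ (α + n) ^ i * |m| ^ (n - i) * n.choose i * x ^ (-α) := by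
        rw [show (n.choose i : ℝ) * ((α + i) ^ i * x ^ (-α)) * |m| ^ (n - i)
          = (α + i) ^ i * |m| ^ (n - i) * n.choose i * x ^ (-α) by ring]
        gcongr

theorem abs_iteratedDeriv_rpow_neg_mul_sin_le_of_le {α x : ℝ} (hα : 0 ≤ α) (hx : 1 ≤ x) (m : ℝ)
    {n N : ℕ} (hn : n ≤ N) :
    |iteratedDeriv n (fun y ↦ y ^ (-α) * sin (m * y)) x| ≤ (1 + α + N + |m|) ^ N * x ^ (-α) := by
  refine (abs_iteratedDeriv_rpow_neg_mul_sin_le hα hx m n).trans ?_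
  have hnN : (n : ℝ) ≤ N := by exact_mod_cast hn
  have h1 : 1 ≤ 1 + α + N + |m| := by linarith [abs_nonneg m, N.cast_nonneg (α := ℝ)]
  gcongr
  calc (α + n + |m|) ^ n ≤ (1 + α + N + |m|) ^ n := by gcongr; linarith
    _ ≤ (1 + α + N + |m|) ^ N := pow_le_pow_right₀ h1 hn

theorem abs_le_div_rpow_of_bounded_of_decay {f : ℝ → ℝ} {M K α p a : ℝ} (hM0 : 0 ≤ M) (hK0 : 0 ≤ K)
    (ha : 0 < a) (hp : 0 ≤ p) (hpα : p ≤ α) (hM : ∀ x ∈ Icc (0 : ℝ) 1, |f x| ≤ M)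
    (hK : ∀ x, 1 < x → |f x| ≤ K * x ^ (-α)) {x : ℝ} (hx : 0 ≤ x) :
    |f x| ≤ (M + K) * (a + 1) ^ α / (a + x) ^ p := by
  have ha1 : 1 ≤ a + 1 := by linarith
  rw [le_div_iff₀ (rpow_pos_of_pos (by linarith) _)]
  rcases le_or_gt x 1 with hx1 | hx1
  · calc |f x| * (a + x) ^ p ≤ M * (a + 1) ^ α := by
          gcongr
          · exact hM x ⟨hx, hx1⟩
          · calc (a + x) ^ p ≤ (a + 1) ^ p := by gcongr
              _ ≤ (a + 1) ^ α := rpow_le_rpow_of_exponent_le ha1 hpα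
      _ ≤ (M + K) * (a + 1) ^ α := by gcongr; linarith
  · have hx0 : 0 < x := by linarith
    calc |f x| * (a + x) ^ p ≤ K * x ^ (-α) * ((a + 1) ^ α * x ^ α) := by
          gcongr
          · exact hK x hx1
          · calc (a + x) ^ p ≤ ((a + 1) * x) ^ p := by gcongr; nlinarith
              _ = (a + 1) ^ p * x ^ p := mul_rpow (by linarith) hx0.le
              _ ≤ (a + 1) ^ α * x ^ α := mul_le_mul (rpow_le_rpow_of_exponent_le ha1 hpα)
                (rpow_le_rpow_of_exponent_le hx1.le hpα) (by positivity) (by positivity)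
      _ = K * (a + 1) ^ α := by
          rw [rpow_neg hx0.le]
          field_simp
      _ ≤ (M + K) * (a + 1) ^ α := by gcongr; linarith

theorem stmt_9_general (m Cm α c : ℝ) (hα : 3 < α) (hc : 0 < c)
    (σt : ℝ → ℝ) (hodd : ∀ x, σt (-x) = -σt x) (hsmooth : ContDiff ℝ 2 σt)
    (htail : ∀ x : ℝ, 1 < |x| → σt x = Real.sign x / |x| ^ α)
    (σ : ℝ → ℝ) (hσ : ∀ x, σ x = Cm * σt x * Real.sin (m * x)) :
    (∀ x, σ (-x) = σ x) ∧
    ∃ C' : ℝ, 0 < C' ∧ ∀ j ≤ 2, ∀ x : ℝ,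
      |iteratedDeriv j σ x| ≤ C' / (c⁻¹ + |x|) ^ (1 + min 1 (α - 3) + (j : ℝ)) := by
  have hsin : ContDiff ℝ 2 fun x ↦ sin (m * x) := contDiff_sin.comp (contDiff_const.mul contDiff_id)
  have hσ_eq : σ = Cm • (σt * fun x ↦ sin (m * x)) := funext fun x ↦ by simp [hσ, mul_assoc]
  have heven : σ.Even := by
    have hsin_odd : Function.Odd fun x ↦ sin (m * x) := fun x ↦ by simp only [mul_neg, sin_neg]
    exact hσ_eq ▸ (Function.Odd.mul_odd hodd hsin_odd).const_smul Cm
  refine ⟨heven, ?_⟩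
  obtain ⟨M, hM⟩ := (hσ_eq ▸ (hsmooth.mul hsin).const_smul Cm : ContDiff ℝ 2 σ)
    |>.exists_bound_iteratedDeriv_of_isCompact (isCompact_Icc (a := 0) (b := 1))
  have hσ_tail_eq : EqOn σ (fun y ↦ Cm * (y ^ (-α) * sin (m * y))) (Ioi 1) := fun y hy ↦ by
    have hy0 : 0 < y := one_pos.trans hy
    show σ y = Cm * (y ^ (-α) * sin (m * y))
    rw [hσ, htail y (by rwa [abs_of_pos hy0]), sign_of_pos hy0, abs_of_pos hy0, rpow_neg hy0.le,
      one_div, mul_assoc]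
  set K := |Cm| * (1 + α + 2 + |m|) ^ 2 with hK
  have hσ_tail : ∀ j ≤ 2, ∀ x, 1 < x → |iteratedDeriv j σ x| ≤ K * x ^ (-α) := fun j hj x hx ↦ by
    rw [hσ_tail_eq.iteratedDeriv_of_isOpen isOpen_Ioi j hx, iteratedDeriv_const_mul_field, abs_mul,
      hK, mul_assoc]
    gcongr
    exact abs_iteratedDeriv_rpow_neg_mul_sin_le_of_le (by linarith) hx.le m hj
  have hM0 : 0 ≤ M := (norm_nonneg _).trans (hM 0 (Nat.zero_le 2) 0 ⟨le_rfl, zero_le_one⟩)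
  have hK0 : 0 ≤ K := by positivity
  refine ⟨(M + K + 1) * (c⁻¹ + 1) ^ α, by positivity, fun j hj x ↦ ?_⟩
  have hjr : (0 : ℝ) ≤ j ∧ (j : ℝ) ≤ 2 := ⟨j.cast_nonneg, by exact_mod_cast hj⟩
  have hε : 0 ≤ min 1 (α - 3) ∧ min 1 (α - 3) ≤ α - 3 :=
    ⟨le_min zero_le_one (by linarith), min_le_right _ _⟩
  calc |iteratedDeriv j σ x| = |iteratedDeriv j σ (|x|)| := (heven.norm_iteratedDeriv_abs j x).symm
    _ ≤ (M + K) * (c⁻¹ + 1) ^ α / (c⁻¹ + |x|) ^ (1 + min 1 (α - 3) + (j : ℝ)) :=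
        abs_le_div_rpow_of_bounded_of_decay hM0 hK0 (inv_pos.mpr hc) (by linarith)
          (by linarith) (hM j hj) (hσ_tail j hj) (abs_nonneg x)
    _ ≤ _ := by gcongr ?_ * _ / _; linarith

theorem stmt_9 (m Cm α c : ℝ) (hα : 3 < α) (hc : 0 < c)
    (σt : ℝ → ℝ) (hodd : ∀ x, σt (-x) = -σt x) (hsmooth : ContDiff ℝ 2 σt)
    (htail : ∀ x : ℝ, 1 < |x| → σt x = Real.sign x / |x| ^ α)
    (hbdd : ∃ B : ℝ, ∀ j ≤ 2, ∀ x ∈ Set.Icc (-1 : ℝ) 1, |iteratedDeriv j σt x| ≤ B)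
    (σ : ℝ → ℝ) (hσ : ∀ x, σ x = Cm * σt x * Real.sin (m * x)) :
    (∀ x, σ (-x) = σ x) ∧
    ∃ C' : ℝ, 0 < C' ∧ ∀ j ≤ 2, ∀ x : ℝ,
      |iteratedDeriv j σ x| ≤ C' / (c⁻¹ + |x|) ^ (1 + min 1 (α - 3) + (j : ℝ)) :=
  stmt_9_general m Cm α c hα hc σt hodd hsmooth htail σ hσ
end
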